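/- arXiv:2305.18749 — 2 statements merged into one kernel-verified Lean document; each statement's English description precedes it below -/
import Mathlib

section
/- (Characterization of the stable reverse Farkas Lemma.) Let f ∈ Γ(X) and assume A ∩ dom f ≠ ∅. Then for each (x*, s) ∈ X*×ℝ the following are equivalent: (a) every x ∈ C with f_i(x) ≤ 0 for all i ∈ I satisfies f(x) − ⟨x*, x⟩ ≥ s; (b) (x*, −s) ∈ w*-cl(epi f* + K). -/
open Pointwise

noncomputable section

variable {X : Type*} [AddCommGroup X] [Module ℝ X] [TopologicalSpace X]

/-- Fenchel conjugate, as a function on the weak-* dual. -/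
def conjFn (h : X → EReal) : WeakDual ℝ X → EReal :=
  fun p => ⨆ x : X, (p x : EReal) - h x

/-- Epigraph of an extended-real-valued function. -/
def epiFn {V : Type*} (h : V → EReal) : Set (V × ℝ) :=
  {q | h q.1 ≤ (q.2 : EReal)}

/-- Graph of an extended-real-valued function (where it is finite). -/
def gphFn {V : Type*} (h : V → EReal) : Set (V × ℝ) :=
  {q | h q.1 = (q.2 : EReal)}

/-- Effective domain. -/
def domFn {V : Type*} (h : V → EReal) : Set V :=
  {x | h x < ⊤}

open Classical in
/-- Indicator function of a set. -/
def indicatorE {V : Type*} (D : Set V) : V → EReal :=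
  fun x => if x ∈ D then (0 : EReal) else ⊤

/-- Convex cone generated by `D ∪ {0}`. -/
def coneGen {V : Type*} [AddCommGroup V] [Module ℝ V] (D : Set V) : Set V :=
  {0} ∪ {y | ∃ t : ℝ, 0 ≤ t ∧ ∃ x ∈ convexHull ℝ D, y = t • x}

/-- `h ∈ Γ(X)`: proper, convex and lower semicontinuous. -/
def InGamma (h : X → EReal) : Prop :=
  (∀ x, h x ≠ ⊥) ∧ (∃ x, h x ≠ ⊤) ∧
    Convex ℝ {q : X × ℝ | h q.1 ≤ (q.2 : EReal)} ∧ LowerSemicontinuous h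

/-- Solution set `A` of the system `σ = {f i x ≤ 0, i ∈ I; x ∈ C}`. -/
def solSet {I : Type*} (C : Set X) (f : I → X → EReal) : Set X :=
  {x | x ∈ C ∧ ∀ i, f i x ≤ (0 : EReal)}

/-- Characteristic cone `K = cone (epi δ_C* ∪ ⋃ i, epi f_i*)` of the system. -/
def charCone {I : Type*} (C : Set X) (f : I → X → EReal) : Set (WeakDual ℝ X × ℝ) :=
  coneGen (epiFn (conjFn (indicatorE C)) ∪ ⋃ i, epiFn (conjFn (f i)))

/-- Barrier cone `barr C = dom δ_C*`. -/
def barCone (C : Set X) : Set (WeakDual ℝ X) :=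
  domFn (conjFn (indicatorE C))

/-- The Farkas–Minkowski constraint qualification. -/
def IsFM {I : Type*} (C : Set X) (f : I → X → EReal) : Prop :=
  (solSet C f).Nonempty ∧ IsClosed (charCone C f)

/-- Recession function `h^∞ = δ*_{dom h*}`. -/
def recFn (h : X → EReal) : X → EReal :=
  fun x => ⨆ q ∈ domFn (conjFn h), ((q x : ℝ) : EReal)

/-- Recession cone `D^∞ = ⋂_{t>0} t (D - a)`, for any `a ∈ D`. -/
def recCone (D : Set X) : Set X :=
  {d | ∀ a ∈ D, ∀ t : ℝ, 0 < t → d ∈ t • (D - ({a} : Set X))}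

/-- Subdifferential of `h` at `a`. -/
def subdiff (h : X → EReal) (a : X) : Set (WeakDual ℝ X) :=
  {p | (∃ r : ℝ, h a = (r : EReal)) ∧ ∀ x, h a + ((p (x - a) : ℝ) : EReal) ≤ h x}

/-!
(b) ⇒ (a): for `x ∈ A`, every `(q, r) ∈ epi g* + K` satisfies `⟨q, x⟩ - r ≤ g x`, and this
inequality is weak-* closed in `(q, r)`.

(a) ⇒ (b): separate `(p, -s)` from `cl (epi g* + K)` in `X* × ℝ`. The closure is upward closed and,
for `a ∈ A ∩ dom g`, satisfies `⟨q, a⟩ - r ≤ g a`, so the separating hyperplane can be tilted to be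
non-vertical; as continuous functionals on the weak-* dual are evaluations, it is
given by some `y ∈ X` and a level `γ`. The bound is stable under adding `K`, so Fenchel–Moreau
(applied to `δ_C`, to each `f_i` and to `g`) yields `y ∈ A` and `g y ≤ γ < ⟨p, y⟩ + s`,
contradicting (a).
-/

section Separation

variable {E : Type*} [AddCommGroup E] [Module ℝ E] [TopologicalSpace E] {T : Set (E × ℝ)}

theorem nonpos_of_forall_add_mul_le {v μ u : ℝ} (H : ∀ t : ℝ, 0 ≤ t → v + t * μ ≤ u) :
    μ ≤ 0 := by
  by_contra! hμ
  have := H ((u - v + 1) / μ) (div_nonneg (by linarith [H 0 le_rfl]) hμ.le)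
  rw [div_mul_cancel₀ _ hμ.ne'] at this
  linarith

theorem StrongDual.apply_prod (F : StrongDual ℝ (E × ℝ)) (z : E × ℝ) :
    F z = F.comp (.inl ℝ E ℝ) z.1 + F (0, 1) * z.2 := by
  have hz : z = (z.1, 0) + z.2 • (0, 1) := by ext <;> simp
  conv_lhs => rw [hz, map_add, map_smul, smul_eq_mul]
  simp [mul_comm]

theorem exists_affine_sep_of_pos {z₀ : E × ℝ} {φ : StrongDual ℝ E} {κ B : ℝ} (hκ : 0 < κ)
    (hT : ∀ z ∈ T, φ z.1 - κ * z.2 ≤ B) (hz₀ : B < φ z₀.1 - κ * z₀.2) :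
    ∃ (φ' : StrongDual ℝ E) (γ : ℝ), (∀ z ∈ T, φ' z.1 - z.2 ≤ γ) ∧ γ < φ' z₀.1 - z₀.2 := by
  refine ⟨κ⁻¹ • φ, κ⁻¹ * B, fun z hz => ?_, ?_⟩
  · have := hT z hz
    simp only [smul_apply, smul_eq_mul]
    rw [← mul_le_mul_iff_of_pos_left hκ]
    field_simp
    linarith
  · simp only [smul_apply, smul_eq_mul]
    rw [← mul_lt_mul_iff_of_pos_left hκ]
    field_simp
    linarith

variable [IsTopologicalAddGroup E] [ContinuousSMul ℝ E] [LocallyConvexSpace ℝ E]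

theorem exists_halfSpace_sep (hT : Convex ℝ T) (hTc : IsClosed T)
    (hup : ∀ z ∈ T, ∀ t : ℝ, 0 ≤ t → z + (0, t) ∈ T) {z₀ : E × ℝ} (hz₀ : z₀ ∉ T) :
    ∃ (φ : StrongDual ℝ E) (μ u : ℝ), 0 ≤ μ ∧ (∀ z ∈ T, φ z.1 - μ * z.2 < u) ∧
      u < φ z₀.1 - μ * z₀.2 := by
  rcases T.eq_empty_or_nonempty with rfl | ⟨z₁, hz₁⟩
  · exact ⟨0, 0, -1, le_rfl, by simp, by simp⟩
  obtain ⟨F, u, hFT, hFz₀⟩ := geometric_hahn_banach_closed_point hT hTc hz₀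
  refine ⟨F.comp (.inl ℝ E ℝ), -F (0, 1), u, ?_, fun z hz => ?_, ?_⟩
  · refine neg_nonneg.2 (nonpos_of_forall_add_mul_le (v := F z₁) (u := u) fun t ht => ?_)
    have := hFT _ (hup z₁ hz₁ t ht)
    rw [map_add, show ((0 : E), t) = t • ((0 : E), (1 : ℝ)) by simp, map_smul, smul_eq_mul] at this
    exact this.le
  · linarith [hFT z hz, F.apply_prod z]
  · linarith [F.apply_prod z₀]

theorem exists_affine_sep_of_mem (hT : Convex ℝ T) (hTc : IsClosed T)
    (hup : ∀ z ∈ T, ∀ t : ℝ, 0 ≤ t → z + (0, t) ∈ T) {x : E} {c r : ℝ} (hc : (x, c) ∈ T)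
    (hr : (x, r) ∉ T) :
    ∃ (φ : StrongDual ℝ E) (γ : ℝ), (∀ z ∈ T, φ z.1 - z.2 ≤ γ) ∧ γ < φ x - r := by
  obtain ⟨φ, μ, u, hμ, hφT, hφx⟩ := exists_halfSpace_sep hT hTc hup hr
  have hμ' : 0 < μ := by
    refine hμ.lt_of_ne fun h => ?_
    have := hφT _ hc
    subst h
    simp only [zero_mul, sub_zero] at this hφx
    linarith
  exact exists_affine_sep_of_pos hμ' (fun z hz => (hφT z hz).le) hφx

theorem exists_affine_sep_of_minorant (hT : Convex ℝ T) (hTc : IsClosed T)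
    (hup : ∀ z ∈ T, ∀ t : ℝ, 0 ≤ t → z + (0, t) ∈ T) {ψ : StrongDual ℝ E} {β : ℝ}
    (hψ : ∀ z ∈ T, ψ z.1 - z.2 ≤ β) {z₀ : E × ℝ} (hz₀ : z₀ ∉ T) :
    ∃ (φ : StrongDual ℝ E) (γ : ℝ), (∀ z ∈ T, φ z.1 - z.2 ≤ γ) ∧ γ < φ z₀.1 - z₀.2 := by
  obtain ⟨φ, μ, u, hμ, hφT, hφz₀⟩ := exists_halfSpace_sep hT hTc hup hz₀
  set ε := φ z₀.1 - μ * z₀.2 - u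
  set d := β - (ψ z₀.1 - z₀.2)
  have hε : 0 < ε := by simp only [ε]; linarith
  -- tilt the separating functional towards the minorant by a weight small enough to keep `z₀` out
  set w := ε / (2 * (|d| + 1))
  have hw : 0 < w := by positivity
  have hwd : w * d < ε := by
    have : w * (2 * (|d| + 1)) = ε := div_mul_cancel₀ _ (by positivity)
    nlinarith [le_abs_self d, abs_nonneg d]
  refine exists_affine_sep_of_pos (φ := φ + w • ψ) (κ := μ + w) (B := u + w * β) (by linarith)
    (fun z hz => ?_) ?_
  · have h1 := hφT z hz
    have h2 := mul_le_mul_of_nonneg_left (hψ z hz) hw.le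
    simp only [add_apply, smul_apply, smul_eq_mul]
    nlinarith
  · simp only [add_apply, smul_apply, smul_eq_mul]
    simp only [ε, d] at hwd
    nlinarith

end Separation

section ConeGen

variable {V : Type*} [AddCommGroup V] [Module ℝ V] {D : Set V} {y y₁ y₂ : V}

theorem zero_mem_coneGen : (0 : V) ∈ coneGen D := Or.inl rfl

theorem subset_coneGen : D ⊆ coneGen D := fun y hy =>
  Or.inr ⟨1, zero_le_one, y, subset_convexHull ℝ D hy, (one_smul ℝ y).symm⟩

theorem smul_mem_coneGen {t : ℝ} (ht : 0 ≤ t) (hy : y ∈ coneGen D) : t • y ∈ coneGen D := by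
  rcases hy with rfl | ⟨s, hs, x, hx, rfl⟩
  · simpa using zero_mem_coneGen
  · exact Or.inr ⟨t * s, mul_nonneg ht hs, x, hx, (mul_smul t s x).symm⟩

theorem add_mem_coneGen (h₁ : y₁ ∈ coneGen D) (h₂ : y₂ ∈ coneGen D) : y₁ + y₂ ∈ coneGen D := by
  rcases h₁ with rfl | ⟨t₁, ht₁, x₁, hx₁, rfl⟩
  · simpa using h₂
  rcases h₂ with rfl | ⟨t₂, ht₂, x₂, hx₂, rfl⟩
  · rw [add_zero]
    exact Or.inr ⟨t₁, ht₁, x₁, hx₁, rfl⟩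
  rcases (add_nonneg ht₁ ht₂).eq_or_lt with h | h
  · obtain ⟨rfl, rfl⟩ : t₁ = 0 ∧ t₂ = 0 := ⟨by linarith, by linarith⟩
    simpa using zero_mem_coneGen
  · refine Or.inr ⟨t₁ + t₂, h.le, (t₁ / (t₁ + t₂)) • x₁ + (t₂ / (t₁ + t₂)) • x₂,
      convex_convexHull ℝ D hx₁ hx₂ (by positivity) (by positivity) (by field_simp), ?_⟩
    rw [smul_add, smul_smul, smul_smul, mul_div_cancel₀ _ h.ne', mul_div_cancel₀ _ h.ne']

theorem convex_coneGen : Convex ℝ (coneGen D) := fun _ h₁ _ h₂ _ _ ha hb _ =>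
  add_mem_coneGen (smul_mem_coneGen ha h₁) (smul_mem_coneGen hb h₂)

theorem apply_nonpos_of_mem_coneGen (ℓ : V →ₗ[ℝ] ℝ) (hD : ∀ y ∈ D, ℓ y ≤ 0)
    (hy : y ∈ coneGen D) : ℓ y ≤ 0 := by
  rcases hy with rfl | ⟨t, ht, x, hx, rfl⟩
  · simp
  · rw [map_smul, smul_eq_mul]
    exact mul_nonpos_of_nonneg_of_nonpos ht
      (convexHull_min hD (convex_halfSpace_le ℓ.isLinear 0) hx)

end ConeGen

theorem add_mem_epiFn {V : Type*} [AddCommGroup V] {h : V → EReal} {z : V × ℝ} {t : ℝ}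
    (hz : z ∈ epiFn h) (ht : 0 ≤ t) : z + (0, t) ∈ epiFn h := by
  simp only [epiFn, Set.mem_ofPred_eq, Prod.fst_add, Prod.snd_add, add_zero] at hz ⊢
  exact hz.trans (EReal.coe_le_coe_iff.2 (by linarith))

theorem epiFn_indicatorE {V : Type*} (D : Set V) : epiFn (indicatorE D) = D ×ˢ Set.Ici 0 := by
  ext ⟨x, r⟩
  by_cases hx : x ∈ D <;> simp [epiFn, indicatorE, hx]

theorem InGamma.isClosed_epiFn {h : X → EReal} (hh : InGamma h) : IsClosed (epiFn h) :=
  hh.2.2.2.isClosed_epigraph.preimage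
    (continuous_fst.prodMk (continuous_coe_real_ereal.comp continuous_snd))

def affineEval (x : X) : WeakDual ℝ X × ℝ →L[ℝ] ℝ :=
  (WeakBilin.eval (topDualPairing ℝ X) x : StrongDual ℝ (WeakDual ℝ X)).comp
    (.fst ℝ (WeakDual ℝ X) ℝ) - .snd ℝ (WeakDual ℝ X) ℝ

@[simp]
theorem affineEval_apply (x : X) (w : WeakDual ℝ X × ℝ) : affineEval x w = w.1 x - w.2 := rfl

theorem mem_epiFn_conjFn_iff {h : X → EReal} {w : WeakDual ℝ X × ℝ} :
    w ∈ epiFn (conjFn h) ↔ ∀ z ∈ epiFn h, affineEval z.1 w ≤ z.2 := by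
  change (⨆ x, (w.1 x : EReal) - h x) ≤ w.2 ↔ _
  rw [iSup_le_iff]
  constructor
  · rintro H ⟨x, v⟩ (hv : h x ≤ v)
    have := (EReal.sub_le_sub le_rfl hv).trans (H x)
    rw [← EReal.coe_sub, EReal.coe_le_coe_iff] at this
    simp only [affineEval_apply]
    linarith
  · intro H x
    induction hx : h x using EReal.rec with
    | bot =>
      have := H (x, w.1 x - w.2 - 1) (by simp [epiFn, hx])
      simp only [affineEval_apply] at this
      linarith
    | coe v =>
      have := H (x, v) (by simp [epiFn, hx])
      rw [← EReal.coe_sub, EReal.coe_le_coe_iff]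
      simp only [affineEval_apply] at this
      linarith
    | top => simp

theorem convex_epiFn_conjFn (h : X → EReal) : Convex ℝ (epiFn (conjFn h)) := by
  have : epiFn (conjFn h) = ⋂ z ∈ epiFn h, {w | affineEval z.1 w ≤ z.2} := by
    ext w
    simp [-affineEval_apply, mem_epiFn_conjFn_iff]
  rw [this]
  exact convex_iInter₂ fun z _ => convex_halfSpace_le (affineEval z.1).isLinear _

section FenchelMoreau

variable [IsTopologicalAddGroup X] [ContinuousSMul ℝ X] [LocallyConvexSpace ℝ X] {h : X → EReal}

theorem epiFn_conjFn_nonempty (hb : ∀ x, h x ≠ ⊥) (hd : ∃ x, h x ≠ ⊤)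
    (hconv : Convex ℝ (epiFn h)) (hcl : IsClosed (epiFn h)) : (epiFn (conjFn h)).Nonempty := by
  obtain ⟨x, hx⟩ := hd
  obtain ⟨c, hc⟩ : ∃ c : ℝ, h x = c := ⟨_, (EReal.coe_toReal hx (hb x)).symm⟩
  obtain ⟨φ, γ, hφ, -⟩ := exists_affine_sep_of_mem hconv hcl (fun _ hz _ => add_mem_epiFn hz)
    (x := x) (c := c) (r := c - 1) (by simp [epiFn, hc])
    (by simp only [epiFn, Set.mem_ofPred_eq, hc, EReal.coe_le_coe_iff]; linarith)
  refine ⟨(StrongDual.toWeakDual φ, γ), mem_epiFn_conjFn_iff.2 fun z hz => ?_⟩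
  have := hφ z hz
  simp only [affineEval_apply, StrongDual.toWeakDual_apply]
  linarith

theorem le_of_forall_affineEval_le (hb : ∀ x, h x ≠ ⊥) (hd : ∃ x, h x ≠ ⊤)
    (hconv : Convex ℝ (epiFn h)) (hcl : IsClosed (epiFn h)) {y : X} {α : ℝ}
    (H : ∀ w ∈ epiFn (conjFn h), affineEval y w ≤ α) : h y ≤ α := by
  by_contra hy
  obtain ⟨w, hw⟩ := epiFn_conjFn_nonempty hb hd hconv hcl
  obtain ⟨φ, γ, hφ, hγ⟩ := exists_affine_sep_of_minorant hconv hcl (fun _ hz _ => add_mem_epiFn hz)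
    (ψ := WeakDual.toStrongDual w.1) (β := w.2) (fun z hz => by
      have := mem_epiFn_conjFn_iff.1 hw z hz
      simp only [affineEval_apply] at this
      simp only [WeakDual.toStrongDual_apply]
      linarith) (z₀ := (y, α)) hy
  have := H (StrongDual.toWeakDual φ, γ) (mem_epiFn_conjFn_iff.2 fun z hz => by
    have := hφ z hz
    simp only [affineEval_apply, StrongDual.toWeakDual_apply]
    linarith)
  simp only [affineEval_apply, StrongDual.toWeakDual_apply] at this
  linarith

theorem InGamma.le_of_forall_affineEval_le (hh : InGamma h) {y : X} {α : ℝ}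
    (H : ∀ w ∈ epiFn (conjFn h), affineEval y w ≤ α) : h y ≤ α :=
  _root_.le_of_forall_affineEval_le hh.1 hh.2.1 hh.2.2.1 hh.isClosed_epiFn H

theorem indicatorE_le_of_forall_affineEval_le {C : Set X} (hCne : C.Nonempty)
    (hCcl : IsClosed C) (hCcv : Convex ℝ C) {y : X} {α : ℝ}
    (H : ∀ w ∈ epiFn (conjFn (indicatorE C)), affineEval y w ≤ α) : indicatorE C y ≤ α := by
  refine le_of_forall_affineEval_le (fun x => ?_) ?_ ?_ ?_ H
  · unfold indicatorE; split_ifs <;> simp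
  · obtain ⟨x, hx⟩ := hCne
    exact ⟨x, by simp [indicatorE, hx]⟩
  · rw [epiFn_indicatorE]; exact hCcv.prod (convex_Ici 0)
  · rw [epiFn_indicatorE]; exact hCcl.prod isClosed_Ici

end FenchelMoreau

instance : LocallyConvexSpace ℝ (WeakDual ℝ X) := WeakBilin.locallyConvexSpace

section System

variable {I : Type*} {C : Set X} {f : I → X → EReal} {g : X → EReal} {x : X}

theorem affineEval_nonpos_of_mem_charCone (hx : x ∈ solSet C f) {k : WeakDual ℝ X × ℝ}
    (hk : k ∈ charCone C f) : affineEval x k ≤ 0 := by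
  refine apply_nonpos_of_mem_coneGen (affineEval x).toLinearMap ?_ hk
  rintro w (hw | hw)
  · simpa using mem_epiFn_conjFn_iff.1 hw (x, 0) (by simp [epiFn, indicatorE, hx.1])
  · obtain ⟨i, hw⟩ := Set.mem_iUnion.1 hw
    simpa using mem_epiFn_conjFn_iff.1 hw (x, 0) (by simpa [epiFn] using hx.2 i)

theorem affineEval_le_of_mem_closure (hx : x ∈ solSet C f) {v : ℝ} (hv : g x ≤ v)
    {z : WeakDual ℝ X × ℝ} (hz : z ∈ closure (epiFn (conjFn g) + charCone C f)) :
    affineEval x z ≤ v := by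
  refine closure_minimal ?_ (isClosed_le (affineEval x).continuous continuous_const) hz
  rintro _ ⟨e, he, k, hk, rfl⟩
  have he' : affineEval x e ≤ v := mem_epiFn_conjFn_iff.1 he (x, v) hv
  exact (map_add (affineEval x) e k).trans_le
    (by linarith [affineEval_nonpos_of_mem_charCone hx hk])

theorem le_sub_of_mem_closure (hg : ∀ x, g x ≠ ⊥) (hx : x ∈ solSet C f) {p : WeakDual ℝ X}
    {s : ℝ} (hps : (p, -s) ∈ closure (epiFn (conjFn g) + charCone C f)) :
    (s : EReal) ≤ g x - p x := by
  induction hgx : g x using EReal.rec with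
  | bot => exact absurd hgx (hg x)
  | coe v =>
    have := affineEval_le_of_mem_closure hx hgx.le hps
    simp only [affineEval_apply] at this
    exact_mod_cast (by linarith : s ≤ v - p x)
  | top => simp

theorem add_mem_closure_epiFn_conjFn_add_charCone {z : WeakDual ℝ X × ℝ} {t : ℝ} (ht : 0 ≤ t)
    (hz : z ∈ closure (epiFn (conjFn g) + charCone C f)) :
    z + (0, t) ∈ closure (epiFn (conjFn g) + charCone C f) := by
  refine map_mem_closure (f := (· + ((0 : WeakDual ℝ X), t))) (by fun_prop) hz ?_
  rintro _ ⟨e, he, k, hk, rfl⟩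
  exact ⟨e + (0, t), add_mem_epiFn he ht, k, hk, add_right_comm _ _ _⟩

variable [IsTopologicalAddGroup X] [ContinuousSMul ℝ X] [LocallyConvexSpace ℝ X]

theorem mem_solSet_and_le_of_forall_affineEval_le (hCne : C.Nonempty) (hCcl : IsClosed C)
    (hCcv : Convex ℝ C) (hf : ∀ i, InGamma (f i)) (hg : InGamma g) {y : X} {γ : ℝ}
    (H : ∀ z ∈ epiFn (conjFn g) + charCone C f, affineEval y z ≤ γ) :
    y ∈ solSet C f ∧ g y ≤ γ := by
  obtain ⟨e, he⟩ := epiFn_conjFn_nonempty hg.1 hg.2.1 hg.2.2.1 hg.isClosed_epiFn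
  -- the bound survives translating `e` along `charCone C f`, so it holds on the cone itself
  have hK : ∀ k ∈ charCone C f, affineEval y k ≤ 0 := fun k hk =>
    nonpos_of_forall_add_mul_le (v := affineEval y e) (u := γ) fun t ht => by
      have := H _ (Set.add_mem_add he (smul_mem_coneGen ht hk))
      rwa [map_add, map_smul, smul_eq_mul] at this
  refine ⟨⟨?_, fun i => ?_⟩, hg.le_of_forall_affineEval_le fun w hw => ?_⟩
  · have := indicatorE_le_of_forall_affineEval_le hCne hCcl hCcv (α := 0) fun w hw =>
      hK w (subset_coneGen (.inl hw))
    by_contra hy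
    simp [indicatorE, hy] at this
  · exact_mod_cast (hf i).le_of_forall_affineEval_le (α := 0) fun w hw =>
      hK w (subset_coneGen (.inr (Set.mem_iUnion.2 ⟨i, hw⟩)))
  · exact H w ⟨w, hw, 0, zero_mem_coneGen, add_zero w⟩

end System

theorem stmt4_general [IsTopologicalAddGroup X] [ContinuousSMul ℝ X] [LocallyConvexSpace ℝ X] {I : Type*} (C : Set X) (hCne : C.Nonempty) (hCcl : IsClosed C) (hCcv : Convex ℝ C)
    (f : I → X → EReal) (hf : ∀ i, InGamma (f i))
    (g : X → EReal) (hg : InGamma g)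
    (hA : (solSet C f ∩ domFn g).Nonempty)
    (p : WeakDual ℝ X) (s : ℝ) :
    (∀ x ∈ C, (∀ i, f i x ≤ (0 : EReal)) → (s : EReal) ≤ g x - ((p x : ℝ) : EReal)) ↔
      (p, -s) ∈ closure (epiFn (conjFn g) + charCone C f) := by
  constructor
  · intro hs
    by_contra hps
    obtain ⟨a, haA, hag⟩ := hA
    obtain ⟨β, hβ⟩ : ∃ β : ℝ, g a = β := ⟨_, (EReal.coe_toReal hag.ne (hg.1 a)).symm⟩
    obtain ⟨φ, γ, hφ, hγ⟩ := exists_affine_sep_of_minorant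
      ((convex_epiFn_conjFn g).add convex_coneGen).closure isClosed_closure
      (fun _ hz _ ht => add_mem_closure_epiFn_conjFn_add_charCone ht hz)
      (ψ := WeakBilin.eval (topDualPairing ℝ X) a)
      (fun z hz => affineEval_le_of_mem_closure haA hβ.le hz) hps
    obtain ⟨y, rfl⟩ := LinearMap.dualEmbedding_surjective (topDualPairing ℝ X) φ
    obtain ⟨⟨hyC, hyf⟩, hgy⟩ := mem_solSet_and_le_of_forall_affineEval_le hCne hCcl hCcv hf hg
      fun z hz => hφ z (subset_closure hz)
    have : (s : EReal) ≤ γ - p y := (hs y hyC hyf).trans (EReal.sub_le_sub hgy le_rfl)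
    have : s ≤ γ - p y := by exact_mod_cast this
    change γ < p y - -s at hγ
    linarith
  · exact fun hps x hxC hxf => le_sub_of_mem_closure hg.1 ⟨hxC, hxf⟩ hps

/-- Theorem 1 (Characterization of the stable reverse Farkas Lemma). -/
theorem stmt4 [IsTopologicalAddGroup X] [ContinuousSMul ℝ X] [LocallyConvexSpace ℝ X] [T2Space X] {I : Type*} (C : Set X) (hCne : C.Nonempty) (hCcl : IsClosed C) (hCcv : Convex ℝ C)
    (f : I → X → EReal) (hf : ∀ i, InGamma (f i))
    (g : X → EReal) (hg : InGamma g)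
    (hA : (solSet C f ∩ domFn g).Nonempty)
    (p : WeakDual ℝ X) (s : ℝ) :
    (∀ x ∈ C, (∀ i, f i x ≤ (0 : EReal)) → (s : EReal) ≤ g x - ((p x : ℝ) : EReal)) ↔
      (p, -s) ∈ closure (epiFn (conjFn g) + charCone C f) :=
  stmt4_general C hCne hCcl hCcv f hf g hg hA p s
end
end

section
/- Let f ∈ Γ(X) with A ∩ dom f = ∅ and A ≠ ∅, and let x* ∈ X*. Then the following are equivalent: (iv) there exists d ∈ ⋂_{i∈I} [f_i^∞ ≤ 0] ∩ C^∞ such that f^∞(d) < ⟨x*, d⟩; (v) there exists d ∈ A^∞ such that f^∞(d) < ⟨x*, d⟩. -/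
/-!
For `h ∈ Γ(X)` with `h a ≤ 0`, `h^∞ d ≤ 0` holds exactly when the ray `a + ℝ₊ d` stays in
`[h ≤ 0]`. If some `q ∈ dom h*` had `q d > 0`, the bound `q (a + s d) - h (a + s d) ≤ h* q` would
fail for large `s`. Conversely, if `h (a + s d) > 0`, separating `(a + s d, 0)` from the closed
convex epigraph gives an affine minorant `q - M` of `h` that is positive at `a + s d`; as
`q d ≤ h^∞ d ≤ 0`, it is positive at `a` too, contradicting `h a ≤ 0`. Since a closed convex set
containing a ray `a + ℝ₊ d` contains the parallel ray from each of its points, (iv) and (v) both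
say that the ray from a fixed `a ∈ A` stays in `A`.
-/

open Pointwise

noncomputable section

variable {X : Type*} [AddCommGroup X] [Module ℝ X] [TopologicalSpace X]

theorem EReal.lt_top_iff_exists_le_coe {c : EReal} : c < ⊤ ↔ ∃ M : ℝ, c ≤ M := by
  refine ⟨fun hc => ?_, fun ⟨M, hM⟩ => hM.trans_lt (EReal.coe_lt_top M)⟩
  induction c using EReal.rec with
  | bot => exact ⟨0, bot_le⟩
  | coe r => exact ⟨r, le_rfl⟩
  | top => exact absurd hc (lt_irrefl ⊤)

theorem nonpos_of_forall_add_mul_le_s13 {a b M : ℝ} (h : ∀ s : ℝ, 0 < s → a + s * b ≤ M) :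
    b ≤ 0 := by
  by_contra! hb
  have hs := h ((|M - a| + 1) / b) (by positivity)
  rw [div_mul_cancel₀ _ hb.ne'] at hs
  linarith [le_abs_self (M - a)]

section RecessionCone

omit [TopologicalSpace X]

variable {D : Set X} {d : X}

theorem mem_recCone_iff : d ∈ recCone D ↔ ∀ a ∈ D, ∀ s : ℝ, 0 < s → a + s • d ∈ D := by
  refine ⟨fun h a ha s hs => ?_, fun h a ha t ht => ?_⟩
  · obtain ⟨_, ⟨x, hx, _, rfl, rfl⟩, hxd⟩ := h a ha s⁻¹ (inv_pos.2 hs)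
    rwa [← hxd, smul_smul, mul_inv_cancel₀ hs.ne', one_smul, add_sub_cancel]
  · refine ⟨t⁻¹ • d, ⟨a + t⁻¹ • d, h a ha t⁻¹ (inv_pos.2 ht), a, rfl, add_sub_cancel_left _ _⟩, ?_⟩
    exact smul_inv_smul₀ ht.ne' d

end RecessionCone

section RecessionConeClosed

variable [ContinuousAdd X] [ContinuousSMul ℝ X] {D : Set X} {a₀ d : X}

/-- The points `a + s • d + (n + 1)⁻¹ • (a₀ - a)` lie on the segment from `a` to
`a₀ + ((n + 1) * s) • d` and tend to `a + s • d`. -/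
theorem Convex.add_smul_mem_of_ray (hcl : IsClosed D) (hcv : Convex ℝ D)
    (hray : ∀ s : ℝ, 0 < s → a₀ + s • d ∈ D) {a : X} (ha : a ∈ D) {s : ℝ} (hs : 0 < s) :
    a + s • d ∈ D := by
  have hmem : ∀ n : ℕ, a + s • d + ((n : ℝ) + 1)⁻¹ • (a₀ - a) ∈ D := fun n => by
    have hn : (0 : ℝ) < (n : ℝ) + 1 := by positivity
    convert hcv ha (hray (((n : ℝ) + 1) * s) (by positivity))
      (sub_nonneg.2 (inv_le_one_of_one_le₀ (by linarith))) (inv_pos.2 hn).le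
      (sub_add_cancel 1 _) using 1
    match_scalars <;> field_simp
    ring
  have hlim : Filter.Tendsto (fun n : ℕ => a + s • d + ((n : ℝ) + 1)⁻¹ • (a₀ - a))
      Filter.atTop (nhds (a + s • d)) := by
    simpa [one_div] using ((tendsto_one_div_add_atTop_nhds_zero_nat (𝕜 := ℝ)).smul_const
      (a₀ - a)).const_add (a + s • d)
  exact hcl.mem_of_tendsto hlim (Filter.Eventually.of_forall hmem)

theorem mem_recCone_of_ray (hcl : IsClosed D) (hcv : Convex ℝ D)
    (hray : ∀ s : ℝ, 0 < s → a₀ + s • d ∈ D) : d ∈ recCone D :=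
  mem_recCone_iff.2 fun _ ha _ hs => hcv.add_smul_mem_of_ray hcl hray ha hs

end RecessionConeClosed

namespace WeakDual

@[simp]
theorem sub_apply (p q : WeakDual ℝ X) (x : X) : (p - q) x = p x - q x := rfl

@[simp]
theorem smul_apply (c : ℝ) (q : WeakDual ℝ X) (x : X) : (c • q) x = c * q x := rfl

end WeakDual

section Conjugate

variable {h : X → EReal}

theorem conjFn_le_coe_iff (hbot : ∀ x, h x ≠ ⊥) {q : WeakDual ℝ X} {M : ℝ} :
    conjFn h q ≤ M ↔ ∀ x (r : ℝ), h x ≤ r → q x - r ≤ M := by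
  refine ⟨fun hq x r hr => ?_, fun hb => iSup_le fun x => ?_⟩
  · have hx : ((q x - r : ℝ) : EReal) ≤ conjFn h q :=
      (EReal.sub_le_sub le_rfl hr).trans (le_iSup (fun y => (q y : EReal) - h y) x)
    exact_mod_cast hx.trans hq
  · induction hx : h x using EReal.rec with
    | bot => exact absurd hx (hbot x)
    | coe r => exact_mod_cast hb x r hx.le
    | top => simp

theorem conjFn_smul_le_of_separates (hbot : ∀ x, h x ≠ ⊥) {q : WeakDual ℝ X} {β u : ℝ}
    (hβ : 0 < β) (hsep : ∀ y (r : ℝ), h y ≤ r → u < q y + β * r) :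
    conjFn h (-β⁻¹ • q) ≤ ((-u / β : ℝ) : EReal) := by
  refine (conjFn_le_coe_iff hbot).2 fun y r hr => ?_
  rw [WeakDual.smul_apply, le_div_iff₀ hβ]
  have := hsep y r hr
  field_simp
  linarith

theorem conjFn_sub_smul_le_of_separates (hbot : ∀ x, h x ≠ ⊥) {p q : WeakDual ℝ X} {M u : ℝ}
    (hp : conjFn h p ≤ M) (hsep : ∀ y (r : ℝ), h y ≤ r → u < q y) {t : ℝ} (ht : 0 ≤ t) :
    conjFn h (p - t • q) ≤ ((M - t * u : ℝ) : EReal) := by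
  refine (conjFn_le_coe_iff hbot).2 fun y r hr => ?_
  have hpy := (conjFn_le_coe_iff hbot).1 hp y r hr
  have hqy := mul_le_mul_of_nonneg_left (hsep y r hr).le ht
  simp only [WeakDual.sub_apply, WeakDual.smul_apply]
  linarith

end Conjugate

theorem isClosed_epiFn {V : Type*} [TopologicalSpace V] {h : V → EReal}
    (hlsc : LowerSemicontinuous h) : IsClosed (epiFn h) :=
  hlsc.isClosed_epigraph.preimage
    (continuous_fst.prodMk (continuous_coe_real_ereal.comp continuous_snd))

section Separation

variable [IsTopologicalAddGroup X] [ContinuousSMul ℝ X] [LocallyConvexSpace ℝ X] {h : X → EReal}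

theorem exists_separates_epiFn (hcv : Convex ℝ (epiFn h)) (hlsc : LowerSemicontinuous h)
    {x : X} {c : ℝ} (hc : (c : EReal) < h x) :
    ∃ (q : WeakDual ℝ X) (β u : ℝ), q x + β * c < u ∧ ∀ y (r : ℝ), h y ≤ r → u < q y + β * r := by
  obtain ⟨φ, u, hφx, hφ⟩ :=
    geometric_hahn_banach_point_closed hcv (isClosed_epiFn hlsc) (x := (x, c)) (not_le.2 hc)
  have hφ_apply : ∀ y r, φ (y, r) = φ (y, 0) + r * φ (0, 1) := fun y r => by
    rw [← smul_eq_mul, ← map_smul, ← map_add]; simp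
  refine ⟨StrongDual.toWeakDual (φ.comp (ContinuousLinearMap.inl ℝ X ℝ)), φ (0, 1), u, ?_,
    fun y r hr => ?_⟩
  · simpa [hφ_apply x c, mul_comm] using hφx
  · simpa [hφ_apply y r, mul_comm] using hφ (y, r) hr

theorem InGamma.exists_conjFn_le_coe (hh : InGamma h) :
    ∃ (q : WeakDual ℝ X) (M : ℝ), conjFn h q ≤ M := by
  obtain ⟨a, ha⟩ := hh.2.1
  have ha' : h a = ((h a).toReal : EReal) := (EReal.coe_toReal ha (hh.1 a)).symm
  obtain ⟨q, β, u, hqa, hsep⟩ := exists_separates_epiFn hh.2.2.1 hh.2.2.2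
    (x := a) (c := (h a).toReal - 1) (by rw [ha']; exact_mod_cast sub_one_lt _)
  have hβ : 0 < β := by linarith [hsep a _ ha'.le]
  exact ⟨_, _, conjFn_smul_le_of_separates hh.1 hβ hsep⟩

/-- Fenchel–Moreau: a function in `Γ(X)` is the supremum of its affine minorants `q - M`. -/
theorem InGamma.exists_conjFn_le_of_lt (hh : InGamma h) {x : X} {c : ℝ}
    (hc : (c : EReal) < h x) :
    ∃ (q : WeakDual ℝ X) (M : ℝ), conjFn h q ≤ M ∧ c < q x - M := by
  obtain ⟨q, β, u, hqx, hsep⟩ := exists_separates_epiFn hh.2.2.1 hh.2.2.2 hc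
  -- `β ≥ 0` because the epigraph contains vertical rays
  have hβ : 0 ≤ β := by
    obtain ⟨y, hy⟩ := hh.2.1
    obtain ⟨r, hr⟩ := EReal.lt_top_iff_exists_le_coe.1 (lt_top_iff_ne_top.2 hy)
    suffices -β ≤ 0 by linarith
    refine nonpos_of_forall_add_mul_le_s13 (a := -(q y + β * r)) (M := -u) fun t ht => ?_
    have := hsep y (r + t) (hr.trans (by exact_mod_cast le_add_of_nonneg_right ht.le))
    rw [mul_add] at this
    linarith
  rcases hβ.lt_or_eq with hβ | rfl
  · refine ⟨_, _, conjFn_smul_le_of_separates hh.1 hβ hsep, ?_⟩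
    rw [WeakDual.smul_apply]
    field_simp
    linarith
  · obtain ⟨p, M, hp⟩ := hh.exists_conjFn_le_coe
    simp only [zero_mul, add_zero] at hqx hsep
    -- a vertical separating hyperplane tilts `p` until its affine minorant exceeds `c` at `x`
    set t := (|c - p x + M| + 1) / (u - q x)
    have ht : t * (u - q x) = |c - p x + M| + 1 := div_mul_cancel₀ _ (by linarith)
    refine ⟨p - t • q, M - t * u, conjFn_sub_smul_le_of_separates hh.1 hp hsep
      (div_pos (by positivity) (by linarith)).le, ?_⟩
    rw [WeakDual.sub_apply, WeakDual.smul_apply]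
    rw [mul_sub] at ht
    linarith [le_abs_self (c - p x + M)]

end Separation

theorem InGamma.recFn_nonpos_iff [IsTopologicalAddGroup X] [ContinuousSMul ℝ X]
    [LocallyConvexSpace ℝ X] {h : X → EReal} (hh : InGamma h) {a d : X} (ha : h a ≤ 0) :
    recFn h d ≤ 0 ↔ ∀ s : ℝ, 0 < s → h (a + s • d) ≤ 0 := by
  refine ⟨fun hd s hs => ?_, fun hray => iSup₂_le fun q hq => ?_⟩
  · by_contra! hpos
    obtain ⟨q, M, hqM, hlt⟩ := hh.exists_conjFn_le_of_lt (c := 0) (by exact_mod_cast hpos)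
    have hqd : q d ≤ 0 := by
      have : ((q d : ℝ) : EReal) ≤ recFn h d :=
        le_iSup₂ (f := fun q _ => ((q d : ℝ) : EReal)) q ((EReal.coe_lt_top M).trans_le' hqM)
      exact_mod_cast this.trans hd
    have hqa := (conjFn_le_coe_iff hh.1).1 hqM a 0 (by exact_mod_cast ha)
    rw [map_add, map_smul, smul_eq_mul] at hlt
    nlinarith
  · obtain ⟨M, hqM⟩ := EReal.lt_top_iff_exists_le_coe.1 hq
    suffices q d ≤ 0 by exact_mod_cast this
    refine nonpos_of_forall_add_mul_le_s13 (a := q a) (M := M) fun s hs => ?_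
    have := (conjFn_le_coe_iff hh.1).1 hqM (a + s • d) 0 (by exact_mod_cast hray s hs)
    rwa [map_add, map_smul, smul_eq_mul, sub_zero] at this

theorem convex_setOf_le_of_convex_epiFn {V : Type*} [AddCommGroup V] [Module ℝ V]
    {h : V → EReal} (hcv : Convex ℝ (epiFn h)) (c : ℝ) :
    Convex ℝ {x | h x ≤ c} := fun x hx y hy a b ha hb hab => by
  simpa [epiFn, ← add_mul, hab] using hcv (x := (x, c)) hx (y := (y, c)) hy ha hb hab

section SolutionSet

variable {I : Type*} {C : Set X} {f : I → X → EReal}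

omit [AddCommGroup X] [Module ℝ X] [TopologicalSpace X] in
theorem solSet_eq_inter_iInter : solSet C f = C ∩ ⋂ i, {x | f i x ≤ 0} := by
  ext x
  simp [solSet]

omit [AddCommGroup X] [Module ℝ X] in
theorem isClosed_solSet (hC : IsClosed C) (hf : ∀ i, LowerSemicontinuous (f i)) :
    IsClosed (solSet C f) := by
  rw [solSet_eq_inter_iInter]
  exact hC.inter (isClosed_iInter fun i => (hf i).isClosed_preimage 0)

omit [TopologicalSpace X] in
theorem convex_solSet (hC : Convex ℝ C) (hf : ∀ i, Convex ℝ (epiFn (f i))) :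
    Convex ℝ (solSet C f) := by
  rw [solSet_eq_inter_iInter]
  exact hC.inter (convex_iInter fun i => by
    simpa using convex_setOf_le_of_convex_epiFn (hf i) 0)

end SolutionSet

theorem stmt13_general [IsTopologicalAddGroup X] [ContinuousSMul ℝ X] [LocallyConvexSpace ℝ X] {I : Type*} (C : Set X) (hCcl : IsClosed C) (hCcv : Convex ℝ C)
    (f : I → X → EReal) (hf : ∀ i, InGamma (f i))
    (g : X → EReal)
    (hAne : (solSet C f).Nonempty)
    (p : WeakDual ℝ X) :
    (∃ d ∈ (⋂ i, {x : X | recFn (f i) x ≤ (0 : EReal)}) ∩ recCone C,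
        recFn g d < ((p d : ℝ) : EReal)) ↔
      ∃ d ∈ recCone (solSet C f), recFn g d < ((p d : ℝ) : EReal) := by
  obtain ⟨a, haC, haf⟩ := hAne
  have hrec : ∀ i d, recFn (f i) d ≤ 0 ↔ ∀ s : ℝ, 0 < s → f i (a + s • d) ≤ 0 :=
    fun i _ => (hf i).recFn_nonpos_iff (haf i)
  have hAcl := isClosed_solSet hCcl fun i => (hf i).2.2.2
  have hAcv := convex_solSet hCcv fun i => (hf i).2.2.1
  constructor
  · rintro ⟨d, ⟨hfd, hCd⟩, hlt⟩
    have hray (s : ℝ) (hs : 0 < s) : a + s • d ∈ solSet C f :=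
      ⟨mem_recCone_iff.1 hCd a haC s hs, fun i => (hrec i d).1 (Set.mem_iInter.1 hfd i) s hs⟩
    exact ⟨d, mem_recCone_of_ray hAcl hAcv hray, hlt⟩
  · rintro ⟨d, hAd, hlt⟩
    have hray := mem_recCone_iff.1 hAd a ⟨haC, haf⟩
    refine ⟨d, ⟨Set.mem_iInter.2 fun i => ?_, ?_⟩, hlt⟩
    · exact (hrec i d).2 fun s hs => (hray s hs).2 i
    · exact mem_recCone_of_ray hCcl hCcv fun s hs => (hray s hs).1

/-- Theorem 4, (iv) ⇔ (v), when moreover `A ≠ ∅`. -/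
theorem stmt13 [IsTopologicalAddGroup X] [ContinuousSMul ℝ X] [LocallyConvexSpace ℝ X] [T2Space X] {I : Type*} (C : Set X) (hCne : C.Nonempty) (hCcl : IsClosed C) (hCcv : Convex ℝ C)
    (f : I → X → EReal) (hf : ∀ i, InGamma (f i))
    (g : X → EReal) (hg : InGamma g)
    (hA : solSet C f ∩ domFn g = ∅) (hAne : (solSet C f).Nonempty)
    (p : WeakDual ℝ X) :
    (∃ d ∈ (⋂ i, {x : X | recFn (f i) x ≤ (0 : EReal)}) ∩ recCone C,
        recFn g d < ((p d : ℝ) : EReal)) ↔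
      ∃ d ∈ recCone (solSet C f), recFn g d < ((p d : ℝ) : EReal) :=
  stmt13_general C hCcl hCcv f hf g hAne p
end
end
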